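/- arXiv:1001.3923 — 3 statements merged into one kernel-verified Lean document; each statement's English description precedes it below -/
import Mathlib

section
/- Let n ≥ 2, let G = ℝⁿ \ {0}, let e₁ be the first standard basis vector of ℝⁿ, and let r > log 2. Then the j-metric ball satisfies B_j(e₁,r) = Bⁿ(e₁, eʳ−1) \ closure(Bⁿ(c, s)), where Bⁿ(a,ρ) denotes the open Euclidean ball of center a and radius ρ, c = e₁/(eʳ(2−eʳ)) and s = (eʳ−1)/(eʳ(eʳ−2)). -/
/-!
In the punctured space `d(y) = ‖y‖`, so with `k = eʳ - 1` the condition `j(e₁, y) < r` reads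
`|e₁ - y| < k` and `|e₁ - y| < k |y|`. For `k > 1` the second condition says that `y` lies
outside the closed Apollonius ball of the points `e₁`, `0` for the ratio `k`, whose center
`-e₁/(k² - 1)` and radius `k/(k² - 1)` are the `c` and `s` of the statement.
-/

/-- The distance ratio metric (`j`-metric) of a domain `G`:
`j_G(x,y) = log (1 + |x-y| / min (d(x), d(y)))` where `d` is the distance to `∂G`. -/
noncomputable def jDist {E : Type*} [NormedAddCommGroup E] (G : Set E) (x y : E) : ℝ :=
  Real.log (1 + dist x y / min (Metric.infDist x (frontier G)) (Metric.infDist y (frontier G)))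

/-- The `j`-metric ball `B_j(x,r) = {y ∈ G : j_G(x,y) < r}`. -/
def jBall {E : Type*} [NormedAddCommGroup E] (G : Set E) (x : E) (r : ℝ) : Set E :=
  {y ∈ G | jDist G x y < r}

open Metric Real

section Apollonius

variable {E : Type*} [NormedAddCommGroup E] [InnerProductSpace ℝ E]

noncomputable def apolloniusCenter (x : E) (k : ℝ) : E := -(k ^ 2 - 1)⁻¹ • x

noncomputable def apolloniusRadius (x : E) (k : ℝ) : ℝ := k * ‖x‖ / (k ^ 2 - 1)

lemma sq_mul_norm_sub_sq_dist_eq (x y : E) {k : ℝ} (hk : k ^ 2 - 1 ≠ 0) :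
    k ^ 2 * ‖y‖ ^ 2 - dist x y ^ 2
      = (k ^ 2 - 1) * (dist y (apolloniusCenter x k) ^ 2 - apolloniusRadius x k ^ 2) := by
  rw [apolloniusCenter, apolloniusRadius, dist_eq_norm, dist_eq_norm, neg_smul, sub_neg_eq_add,
    norm_add_sq_real, norm_sub_sq_real, inner_smul_right, norm_smul, real_inner_comm,
    Real.norm_eq_abs, mul_pow, sq_abs]
  field_simp
  ring

lemma apolloniusRadius_lt_dist_apolloniusCenter_iff {x y : E} {k : ℝ} (hk : 1 < k) :
    apolloniusRadius x k < dist y (apolloniusCenter x k) ↔ dist x y < k * ‖y‖ := by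
  have hD : 0 < k ^ 2 - 1 := by nlinarith
  have hr : 0 ≤ apolloniusRadius x k := by unfold apolloniusRadius; positivity
  rw [← sq_lt_sq₀ hr dist_nonneg, ← sq_lt_sq₀ dist_nonneg (by positivity), ← sub_pos,
    ← sub_pos (a := (k * ‖y‖) ^ 2), mul_pow, sq_mul_norm_sub_sq_dist_eq x y hD.ne',
    mul_pos_iff_of_pos_left hD]

end Apollonius

section Punctured

variable {E : Type*} [NormedAddCommGroup E] [NormedSpace ℝ E]

lemma frontier_compl_singleton_zero [Nontrivial E] : frontier ({0}ᶜ : Set E) = {0} := by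
  rw [frontier_compl, isClosed_singleton.frontier_eq, interior_singleton, Set.sdiff_empty]

lemma mem_jBall_compl_zero_iff {x y : E} (hx : x ≠ 0) (r : ℝ) :
    y ∈ jBall {0}ᶜ x r ↔ dist x y < (exp r - 1) * min ‖x‖ ‖y‖ := by
  have : Nontrivial E := ⟨⟨x, 0, hx⟩⟩
  rcases eq_or_ne y 0 with rfl | hy
  · simp [jBall]
  have hm : 0 < min ‖x‖ ‖y‖ := lt_min (norm_pos_iff.2 hx) (norm_pos_iff.2 hy)
  simp only [jBall, jDist, frontier_compl_singleton_zero, infDist_singleton, dist_zero_right,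
    Set.mem_compl_singleton_iff, hy, ne_eq, not_false_eq_true, true_and, Set.mem_ofPred_eq]
  rw [log_lt_iff_lt_exp (by positivity), ← lt_sub_iff_add_lt', div_lt_iff₀ hm]

end Punctured

/-- Klén, proof of Theorem 2.1: in `G = ℝⁿ \ {0}` with `r > log 2`, the `j`-metric ball
centered at `e₁` is `B_j(e₁,r) = Bⁿ(e₁, eʳ-1) \ closure Bⁿ(c,s)` with
`c = e₁/(eʳ(2-eʳ))` and `s = (eʳ-1)/(eʳ(eʳ-2))`. -/
theorem jBall_eq_ball_diff_closure_ball {n : ℕ} (hn : 2 ≤ n) (r : ℝ) (hr : Real.log 2 < r)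
    (e₁ c : EuclideanSpace ℝ (Fin n)) (s : ℝ)
    (he₁ : e₁ = EuclideanSpace.single (⟨0, by omega⟩ : Fin n) 1)
    (hc : c = (Real.exp r * (2 - Real.exp r))⁻¹ • e₁)
    (hs : s = (Real.exp r - 1) / (Real.exp r * (Real.exp r - 2))) :
    jBall ({0}ᶜ : Set (EuclideanSpace ℝ (Fin n))) e₁ r
      = Metric.ball e₁ (Real.exp r - 1) \ closure (Metric.ball c s) := by
  set k := exp r - 1
  have hk : 1 < k := by
    have := (log_lt_iff_lt_exp two_pos).1 hr
    linarith
  have he₁_norm : ‖e₁‖ = 1 := by simp [he₁]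
  have he₁_ne : e₁ ≠ 0 := norm_ne_zero_iff.1 (by simp [he₁_norm])
  have hD : exp r * (exp r - 2) = k ^ 2 - 1 := by ring
  have hc' : c = apolloniusCenter e₁ k := by
    rw [hc, apolloniusCenter, ← inv_neg, ← hD]
    ring_nf
  have hs' : s = apolloniusRadius e₁ k := by rw [hs, apolloniusRadius, he₁_norm, mul_one, hD]
  have hs_pos : 0 < s := by
    rw [hs, hD]
    exact div_pos (by linarith) (by nlinarith)
  ext y
  rw [mem_jBall_compl_zero_iff he₁_ne, he₁_norm, mul_min_of_nonneg _ _ (by linarith), lt_min_iff,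
    mul_one, closure_ball c hs_pos.ne', Set.mem_sdiff, mem_ball, mem_closedBall, not_le, hc', hs',
    apolloniusRadius_lt_dist_apolloniusCenter_iff hk, dist_comm y]
end

section
/- Let n ≥ 2, let G = ℝⁿ \ {0}, let x ∈ G and let 0 < r ≤ λ. Then the quasihyperbolic ball B_k(x,r) is close-to-convex. -/
/-- A half-line in a real vector space: `{z + t • y : t > 0}` or `{z + t • y : t ≥ 0}`
for some point `z` and nonzero direction `y`. -/
def IsHalfLine {E : Type*} [AddCommGroup E] [Module ℝ E] (S : Set E) : Prop :=
  ∃ z y : E, y ≠ 0 ∧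
    (S = {x | ∃ t : ℝ, 0 < t ∧ x = z + t • y} ∨ S = {x | ∃ t : ℝ, 0 ≤ t ∧ x = z + t • y})

/-- A set `G` is close-to-convex if its complement is the union of a family of
pairwise disjoint half-lines. -/
def CloseToConvex {E : Type*} [AddCommGroup E] [Module ℝ E] (G : Set E) : Prop :=
  ∃ 𝒞 : Set (Set E), (∀ S ∈ 𝒞, IsHalfLine S) ∧ 𝒞.Pairwise Disjoint ∧ ⋃₀ 𝒞 = Gᶜ

/-- The quasihyperbolic metric of the punctured space `ℝⁿ \ {0}` (Martin–Osgood formula):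
`k(x,y) = √(α² + log²(|x|/|y|))` where `α ∈ [0,π]` is the angle between `[x,0]` and `[0,y]`. -/
noncomputable def qhDist {E : Type*} [NormedAddCommGroup E] [InnerProductSpace ℝ E]
    (x y : E) : ℝ :=
  Real.sqrt ((InnerProductGeometry.angle x y) ^ 2 + (Real.log (‖x‖ / ‖y‖)) ^ 2)

/-- The quasihyperbolic ball `B_k(x,r) = {y ∈ ℝⁿ \ {0} : k(x,y) < r}` of the punctured space. -/
def kBall {E : Type*} [NormedAddCommGroup E] [InnerProductSpace ℝ E] (x : E) (r : ℝ) : Set E :=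
  {y | y ≠ 0 ∧ qhDist x y < r}

/-!
The complement of `B_k(x, r)` consists of `0` and the points `p ≠ 0` with
`√(r² - θ²) ≤ |log (‖p‖ / ‖x‖)|`, where `θ = ∠(x, p)`. It splits into an outer region
(`θ < r` and `‖p‖ ≥ ‖x‖ e^{√(r² - θ²)}`), a union of radial half-lines, and an inner region
(`θ ≥ r` or `‖p‖ ≤ ‖x‖ e^{-√(r² - θ²)}`), cut by the lines parallel to `x`. On such a line at
distance `v > 0` from the axis `‖p‖ = v / sin θ`, so the inner condition reads
`v · exp (√(r² - θ²) - log (sin θ)) ≤ ‖x‖`; as `θ` increases in the direction `-x`, each piece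
is a half-line once this function of `θ` decreases on `(0, r)`. Its derivative has the sign of
`-(cos θ · √(r² - θ²) + θ sin θ)`, which is `≤ 0` when `θ + r cos θ ≥ 0`; for `r ≤ λ` this follows
from the tangent line of the convex function `cos` at `√(λ² - 1)`, where `sin = 1 / λ`.
-/

open Real Set InnerProductGeometry RealInnerProductSpace
open NormedSpace (normalize norm_smul_normalize norm_normalize_eq_one_iff normalize_smul_of_pos
  normalize_eq_zero_iff normalize_normalize)

theorem sin_le_sin_add_cos_mul_sub {b s : ℝ} (hb : b ∈ Icc 0 π) (hs : s ∈ Icc 0 π) :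
    sin s ≤ sin b + cos b * (s - b) := by
  rcases lt_trichotomy s b with hsb | rfl | hbs
  · have := strictConcaveOn_sin_Icc.concaveOn.le_slope_of_hasDerivAt hs hb hsb (hasDerivAt_sin b)
    rw [slope_def_field, le_div_iff₀ (by linarith)] at this
    linarith
  · simp
  · have := strictConcaveOn_sin_Icc.concaveOn.slope_le_of_hasDerivAt hb hs hbs (hasDerivAt_sin b)
    rw [slope_def_field, div_le_iff₀ (by linarith)] at this
    linarith

theorem cos_sub_sin_mul_sub_le_cos {a t : ℝ} (ha : a ∈ Icc (π / 2) (3 * π / 2))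
    (ht : t ∈ Icc (π / 2) (3 * π / 2)) : cos a - sin a * (t - a) ≤ cos t := by
  have := sin_le_sin_add_cos_mul_sub (b := a - π / 2) (s := t - π / 2)
    ⟨by linarith [ha.1], by linarith [ha.2]⟩ ⟨by linarith [ht.1], by linarith [ht.2]⟩
  rw [sin_sub_pi_div_two, sin_sub_pi_div_two, cos_sub_pi_div_two] at this
  linarith

theorem add_mul_cos_nonneg_of_lam {lam t : ℝ} (hlam : lam ∈ Ioo 2 π)
    (hlam0 : cos √(lam ^ 2 - 1) + √(lam ^ 2 - 1) * sin √(lam ^ 2 - 1) = 0)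
    (ht : t ∈ Icc (π / 2) π) : 0 ≤ t + lam * cos t := by
  obtain ⟨hlam2, hlamπ⟩ := hlam
  set a := √(lam ^ 2 - 1)
  have ha2 : a ^ 2 = lam ^ 2 - 1 := sq_sqrt (by nlinarith)
  have ha0 : 0 ≤ a := sqrt_nonneg _
  have haπ : a < π := lt_of_pow_lt_pow_left₀ 2 pi_pos.le (by nlinarith)
  have haπ2 : π / 2 < a := lt_of_pow_lt_pow_left₀ 2 ha0 (by nlinarith [pi_lt_d2])
  have hsin : 0 < sin a := sin_pos_of_pos_of_lt_pi (by linarith [pi_pos]) haπ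
  -- `cos a = -a sin a` and `sin² a + cos² a = 1` force `sin a = 1 / lam`.
  have hsin_mul : sin a * lam = 1 := by
    have hsq : (sin a * lam) ^ 2 = 1 := by
      linear_combination (sin_sq_add_cos_sq a) + (a * sin a - cos a) * hlam0 - sin a ^ 2 * ha2
    exact (pow_eq_one_iff_of_nonneg (by positivity) two_ne_zero).1 hsq
  have htangent := cos_sub_sin_mul_sub_le_cos (a := a) (t := t)
    ⟨haπ2.le, by linarith⟩ ⟨ht.1, by linarith [ht.2]⟩
  have hline : lam * (cos a - sin a * (t - a)) = -t := by
    linear_combination lam * hlam0 - t * hsin_mul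
  nlinarith

theorem add_mul_cos_nonneg_of_le_lam {lam r : ℝ} (hlam : lam ∈ Ioo 2 π)
    (hlam0 : cos √(lam ^ 2 - 1) + √(lam ^ 2 - 1) * sin √(lam ^ 2 - 1) = 0)
    (hr : r ≤ lam) {t : ℝ} (ht : t ∈ Ioo 0 r) : 0 ≤ t + r * cos t := by
  rcases le_or_gt 0 (cos t) with hcos | hcos
  · nlinarith [ht.1, ht.2]
  · have hπ2t : π / 2 < t := by
      by_contra! h
      exact hcos.not_ge (cos_nonneg_of_mem_Icc ⟨by linarith [ht.1, pi_pos], h⟩)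
    have := add_mul_cos_nonneg_of_lam hlam hlam0 ⟨hπ2t.le, by linarith [ht.2, hlam.2]⟩
    nlinarith

theorem cos_mul_sqrt_add_mul_sin_nonneg {r t : ℝ} (ht : 0 < t) (hsin : 0 < sin t)
    (hrt : t ≤ r) (hcos : 0 ≤ t + r * cos t) : 0 ≤ cos t * √(r ^ 2 - t ^ 2) + t * sin t := by
  rcases le_or_gt 0 (cos t) with hc | hc
  · positivity
  · have hrc : (r * cos t) ^ 2 ≤ t ^ 2 := by
      rw [← neg_sq]; exact pow_le_pow_left₀ (by nlinarith) (by linarith) 2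
    have hsq : (-cos t * √(r ^ 2 - t ^ 2)) ^ 2 ≤ (t * sin t) ^ 2 := by
      rw [mul_pow, sq_sqrt (by nlinarith), mul_pow, sin_sq]
      nlinarith
    have := (pow_le_pow_iff_left₀ (mul_nonneg (by linarith) (sqrt_nonneg _)) (by positivity)
      two_ne_zero).1 hsq
    linarith

theorem antitoneOn_sqrt_sub_log_sin {r : ℝ} (hrπ : r ≤ π)
    (hcos : ∀ t ∈ Ioo 0 r, 0 ≤ t + r * cos t) :
    AntitoneOn (fun t => √(r ^ 2 - t ^ 2) - log (sin t)) (Ioo 0 r) := by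
  have hderiv : ∀ t ∈ Ioo 0 r, HasDerivAt (fun t => √(r ^ 2 - t ^ 2) - log (sin t))
      (-(t / √(r ^ 2 - t ^ 2) + cos t / sin t)) t := by
    intro t ht
    have hsin : sin t ≠ 0 := (sin_pos_of_pos_of_lt_pi ht.1 (ht.2.trans_le hrπ)).ne'
    have hsqrt : r ^ 2 - t ^ 2 ≠ 0 := by nlinarith [ht.1, ht.2]
    refine ((((hasDerivAt_pow 2 t).const_sub (r ^ 2)).sqrt hsqrt).sub
      ((hasDerivAt_sin t).log hsin)).congr_deriv ?_
    field_simp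
    ring
  refine antitoneOn_of_deriv_nonpos (convex_Ioo 0 r)
    (fun t ht => (hderiv t ht).continuousAt.continuousWithinAt)
    (fun t ht => (hderiv t (by rwa [interior_Ioo] at ht)).differentiableAt.differentiableWithinAt)
    fun t ht => ?_
  rw [interior_Ioo] at ht
  have hsin : 0 < sin t := sin_pos_of_pos_of_lt_pi ht.1 (ht.2.trans_le hrπ)
  have hsqrt : 0 < √(r ^ 2 - t ^ 2) := sqrt_pos.2 (by nlinarith [ht.1, ht.2])
  have hnum := cos_mul_sqrt_add_mul_sin_nonneg ht.1 hsin ht.2.le (hcos t ht)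
  rw [(hderiv t ht).deriv, neg_nonpos, div_add_div _ _ hsqrt.ne' hsin.ne']
  apply div_nonneg (by linarith) (by positivity)

section HalfLine

variable {E : Type*} [AddCommGroup E] [Module ℝ E]

theorem isHalfLine_image_Ici {d : E} (hd : d ≠ 0) (z : E) (c : ℝ) :
    IsHalfLine ((fun t : ℝ => t • d + z) '' Ici c) := by
  refine ⟨c • d + z, d, hd, Or.inr (Set.ext fun p => ⟨?_, ?_⟩)⟩
  · rintro ⟨t, ht, rfl⟩
    exact ⟨t - c, sub_nonneg.2 ht, by module⟩
  · rintro ⟨s, hs, rfl⟩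
    exact ⟨c + s, le_add_of_nonneg_right hs, by module⟩

theorem isHalfLine_image_Iic {d : E} (hd : d ≠ 0) (z : E) (c : ℝ) :
    IsHalfLine ((fun t : ℝ => t • d + z) '' Iic c) := by
  refine ⟨c • d + z, -d, neg_ne_zero.2 hd, Or.inr (Set.ext fun p => ⟨?_, ?_⟩)⟩
  · rintro ⟨t, ht, rfl⟩
    exact ⟨c - t, sub_nonneg.2 ht, by module⟩
  · rintro ⟨s, hs, rfl⟩
    exact ⟨c - s, sub_le_self c hs, by module⟩

theorem isHalfLine_image_Iio {d : E} (hd : d ≠ 0) (z : E) (c : ℝ) :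
    IsHalfLine ((fun t : ℝ => t • d + z) '' Iio c) := by
  refine ⟨c • d + z, -d, neg_ne_zero.2 hd, Or.inl (Set.ext fun p => ⟨?_, ?_⟩)⟩
  · rintro ⟨t, ht, rfl⟩
    exact ⟨c - t, sub_pos.2 ht, by module⟩
  · rintro ⟨s, hs, rfl⟩
    exact ⟨c - s, sub_lt_self c hs, by module⟩

theorem IsLowerSet.eq_Iic_or_Iio {α : Type*} [ConditionallyCompleteLinearOrder α] {S : Set α}
    (hS : IsLowerSet S) (hne : S.Nonempty) (hbdd : BddAbove S) :
    S = Iic (sSup S) ∨ S = Iio (sSup S) := by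
  by_cases hmax : sSup S ∈ S
  · exact Or.inl (Set.ext fun a => ⟨fun ha => le_csSup hbdd ha, fun ha => hS ha hmax⟩)
  · refine Or.inr (Set.ext fun a => ⟨fun ha => ?_, fun ha => ?_⟩)
    · exact (le_csSup hbdd ha).lt_of_ne fun h => hmax (h ▸ ha)
    · obtain ⟨b, hb, hab⟩ := exists_lt_of_lt_csSup hne ha
      exact hS hab.le hb

theorem IsLowerSet.isHalfLine_image {S : Set ℝ} (hS : IsLowerSet S) (hne : S.Nonempty)
    (hbdd : BddAbove S) {d : E} (hd : d ≠ 0) (z : E) :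
    IsHalfLine ((fun t : ℝ => t • d + z) '' S) := by
  rcases hS.eq_Iic_or_Iio hne hbdd with h | h <;> rw [h]
  exacts [isHalfLine_image_Iic hd z _, isHalfLine_image_Iio hd z _]

theorem closeToConvex_of_leaves {G : Set E} (L : E → Set E) (hmem : ∀ y ∈ Gᶜ, y ∈ L y)
    (hsub : ∀ y ∈ Gᶜ, L y ⊆ Gᶜ) (hhalf : ∀ y ∈ Gᶜ, IsHalfLine (L y))
    (hleaf : ∀ y ∈ Gᶜ, ∀ p ∈ L y, L p = L y) : CloseToConvex G := by
  refine ⟨L '' Gᶜ, ?_, ?_, ?_⟩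
  · rintro _ ⟨y, hy, rfl⟩
    exact hhalf y hy
  · rintro _ ⟨y, hy, rfl⟩ _ ⟨y', hy', rfl⟩ hne
    refine Set.disjoint_left.2 fun p hp hp' => hne ?_
    rw [← hleaf y hy p hp, hleaf y' hy' p hp']
  · refine subset_antisymm (sUnion_subset ?_) fun y hy => ⟨L y, mem_image_of_mem L hy, hmem y hy⟩
    rintro _ ⟨y, hy, rfl⟩
    exact hsub y hy

end HalfLine

section OrthogonalLine

variable {E : Type*} [NormedAddCommGroup E] [InnerProductSpace ℝ E] {e w : E}

theorem norm_smul_add_sq_of_inner_eq_zero (he : ‖e‖ = 1) (hew : ⟪e, w⟫ = 0) (a : ℝ) :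
    ‖a • e + w‖ ^ 2 = a ^ 2 + ‖w‖ ^ 2 := by
  rw [norm_add_sq_real, real_inner_smul_left, hew, norm_smul, he, norm_eq_abs, mul_one, sq_abs]
  ring

theorem inner_smul_add_of_inner_eq_zero (he : ‖e‖ = 1) (hew : ⟪e, w⟫ = 0) (a : ℝ) :
    ⟪e, a • e + w⟫ = a := by
  rw [inner_add_right, real_inner_smul_right, real_inner_self_eq_norm_sq, he, hew]
  ring

theorem norm_smul_add_pos_of_inner_eq_zero (he : ‖e‖ = 1) (hew : ⟪e, w⟫ = 0) (hw : w ≠ 0)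
    (a : ℝ) : 0 < ‖a • e + w‖ := by
  rw [← sq_lt_sq₀ le_rfl (norm_nonneg _), norm_smul_add_sq_of_inner_eq_zero he hew,
    zero_pow two_ne_zero]
  exact add_pos_of_nonneg_of_pos (sq_nonneg a) (pow_pos (norm_pos_iff.2 hw) 2)

theorem sqrt_one_add_div_sq_eq (he : ‖e‖ = 1) (hew : ⟪e, w⟫ = 0) (hw : w ≠ 0) (a : ℝ) :
    √(1 + (a / ‖w‖) ^ 2) = ‖a • e + w‖ / ‖w‖ := by
  have hv : 0 < ‖w‖ := norm_pos_iff.2 hw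
  rw [← sqrt_sq (div_nonneg (norm_nonneg _) hv.le), div_pow (‖a • e + w‖),
    norm_smul_add_sq_of_inner_eq_zero he hew]
  congr 1
  field_simp
  ring

theorem angle_smul_add_of_inner_eq_zero (he : ‖e‖ = 1) (hew : ⟪e, w⟫ = 0) (hw : w ≠ 0)
    (a : ℝ) : angle e (a • e + w) = π / 2 - arctan (a / ‖w‖) := by
  have hv : 0 < ‖w‖ := norm_pos_iff.2 hw
  have hp := norm_smul_add_pos_of_inner_eq_zero he hew hw a
  have hcos : ⟪e, a • e + w⟫ / (‖e‖ * ‖a • e + w‖) = sin (arctan (a / ‖w‖)) := by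
    rw [sin_arctan, sqrt_one_add_div_sq_eq he hew hw, inner_smul_add_of_inner_eq_zero he hew, he]
    field_simp
  rw [angle, hcos, arccos_eq_pi_div_two_sub_arcsin, arcsin_sin (neg_pi_div_two_lt_arctan _).le
    (arctan_lt_pi_div_two _).le]

theorem norm_mul_sin_angle_smul_add_of_inner_eq_zero (he : ‖e‖ = 1) (hew : ⟪e, w⟫ = 0)
    (hw : w ≠ 0) (a : ℝ) : ‖a • e + w‖ * sin (angle e (a • e + w)) = ‖w‖ := by
  have hv : 0 < ‖w‖ := norm_pos_iff.2 hw
  rw [angle_smul_add_of_inner_eq_zero he hew hw, sin_pi_div_two_sub, cos_arctan,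
    sqrt_one_add_div_sq_eq he hew hw]
  have hp := norm_smul_add_pos_of_inner_eq_zero he hew hw a
  field_simp

end OrthogonalLine

section PuncturedSpace

variable {E : Type*} [NormedAddCommGroup E] [InnerProductSpace ℝ E] {x y p u w : E} {r : ℝ}

def outerRegion (x : E) (r : ℝ) : Set E :=
  {p | angle x p < r ∧ ‖x‖ * exp √(r ^ 2 - angle x p ^ 2) ≤ ‖p‖}

def innerRegion (x : E) (r : ℝ) : Set E :=
  {p | r ≤ angle x p ∨ ‖p‖ * exp √(r ^ 2 - angle x p ^ 2) ≤ ‖x‖}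

theorem le_qhDist_iff (hx : x ≠ 0) (hy : y ≠ 0) (hr : 0 ≤ r) :
    r ≤ qhDist x y ↔ y ∈ outerRegion x r ∪ innerRegion x r := by
  have hx' : 0 < ‖x‖ := norm_pos_iff.2 hx
  have hy' : 0 < ‖y‖ := norm_pos_iff.2 hy
  rw [qhDist, le_sqrt hr (by positivity)]
  rcases le_or_gt r (angle x y) with hθ | hθ
  · exact iff_of_true (by nlinarith [sq_nonneg (log (‖x‖ / ‖y‖))]) (Or.inr (Or.inl hθ))
  have hout : ‖x‖ * exp √(r ^ 2 - angle x y ^ 2) ≤ ‖y‖ ↔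
      √(r ^ 2 - angle x y ^ 2) ≤ -log (‖x‖ / ‖y‖) := by
    rw [← log_inv, inv_div, le_log_iff_exp_le (by positivity), le_div_iff₀ hx', mul_comm]
  have hin : ‖y‖ * exp √(r ^ 2 - angle x y ^ 2) ≤ ‖x‖ ↔
      √(r ^ 2 - angle x y ^ 2) ≤ log (‖x‖ / ‖y‖) := by
    rw [le_log_iff_exp_le (by positivity), le_div_iff₀ hy', mul_comm]
  simp only [outerRegion, innerRegion, mem_union, mem_ofPred_eq, hθ, not_le.2 hθ, true_and,
    false_or, hout, hin, or_comm, ← le_abs, sqrt_le_left (abs_nonneg _), sq_abs]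
  exact sub_le_iff_le_add'.symm

theorem compl_kBall (hx : x ≠ 0) (hr : 0 ≤ r) :
    (kBall x r)ᶜ = outerRegion x r ∪ innerRegion x r := by
  ext y
  rcases eq_or_ne y 0 with rfl | hy
  · refine iff_of_true (fun h => h.1 rfl) (Or.inr (Or.inr ?_))
    rw [norm_zero, zero_mul]
    exact norm_nonneg x
  · simp only [kBall, mem_compl_iff, mem_ofPred_eq, ne_eq, hy, not_false_eq_true, true_and,
      not_lt, le_qhDist_iff hx hy hr]

theorem disjoint_outerRegion_innerRegion (hx : x ≠ 0) :
    Disjoint (outerRegion x r) (innerRegion x r) := by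
  refine Set.disjoint_left.2 fun p ⟨hθ, hout⟩ hin => ?_
  have hin := hin.resolve_left (not_le.2 hθ)
  have hexp : 1 < exp √(r ^ 2 - angle x p ^ 2) :=
    one_lt_exp_iff.2 (sqrt_pos.2 (by nlinarith [angle_nonneg x p]))
  have hx' : 0 < ‖x‖ := norm_pos_iff.2 hx
  refine lt_irrefl ‖x‖ (calc
    ‖x‖ < ‖x‖ * exp √(r ^ 2 - angle x p ^ 2) := lt_mul_of_one_lt_right hx' hexp
    _ ≤ ‖x‖ * exp √(r ^ 2 - angle x p ^ 2) * exp √(r ^ 2 - angle x p ^ 2) :=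
      le_mul_of_one_le_right (by positivity) hexp.le
    _ ≤ ‖p‖ * exp √(r ^ 2 - angle x p ^ 2) := by gcongr
    _ ≤ ‖x‖ := hin)

theorem ne_zero_of_mem_outerRegion (hx : x ≠ 0) (hy : y ∈ outerRegion x r) : y ≠ 0 :=
  norm_pos_iff.1 ((mul_pos (norm_pos_iff.2 hx) (exp_pos _)).trans_le hy.2)

def radialLeaf (x : E) (r : ℝ) (u : E) : Set E :=
  (· • u) '' Ici (‖x‖ * exp √(r ^ 2 - angle x u ^ 2))

theorem mem_radialLeaf (hy : y ∈ outerRegion x r) : y ∈ radialLeaf x r (normalize y) :=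
  ⟨‖y‖, by rw [mem_Ici, angle_normalize_right]; exact hy.2, norm_smul_normalize y⟩

theorem radialLeaf_subset (hx : x ≠ 0) (hy : y ∈ outerRegion x r) :
    radialLeaf x r (normalize y) ⊆ outerRegion x r := by
  rintro _ ⟨t, ht, rfl⟩
  rw [mem_Ici, angle_normalize_right] at ht
  have ht0 : 0 < t := (mul_pos (norm_pos_iff.2 hx) (exp_pos _)).trans_le ht
  have hnorm : ‖t • normalize y‖ = t := by
    rw [norm_smul, norm_normalize_eq_one_iff.2 (ne_zero_of_mem_outerRegion hx hy), mul_one,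
      norm_of_nonneg ht0.le]
  rw [outerRegion, mem_ofPred_eq, angle_smul_right_of_pos _ _ ht0, angle_normalize_right, hnorm]
  exact ⟨hy.1, ht⟩

theorem normalize_eq_of_mem_radialLeaf (hx : x ≠ 0) (hp : p ∈ radialLeaf x r u) :
    normalize p = normalize u := by
  obtain ⟨t, ht, rfl⟩ := hp
  exact normalize_smul_of_pos ((mul_pos (norm_pos_iff.2 hx) (exp_pos _)).trans_le ht) u

theorem isHalfLine_radialLeaf (hu : u ≠ 0) : IsHalfLine (radialLeaf x r u) := by
  simpa [radialLeaf] using isHalfLine_image_Ici hu 0 (‖x‖ * exp √(r ^ 2 - angle x u ^ 2))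

noncomputable def orthComponent (x y : E) : E := y - ⟪normalize x, y⟫ • normalize x

theorem inner_smul_add_orthComponent (x y : E) :
    ⟪normalize x, y⟫ • normalize x + orthComponent x y = y :=
  add_sub_cancel _ _

theorem inner_normalize_orthComponent (hx : x ≠ 0) (y : E) :
    ⟪normalize x, orthComponent x y⟫ = 0 := by
  rw [orthComponent, inner_sub_right, real_inner_smul_right, real_inner_self_eq_norm_sq,
    norm_normalize_eq_one_iff.2 hx]
  ring

theorem orthComponent_smul_add (hx : x ≠ 0) (hw : ⟪normalize x, w⟫ = 0) (a : ℝ) :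
    orthComponent x (a • normalize x + w) = w := by
  rw [orthComponent, inner_smul_add_of_inner_eq_zero (norm_normalize_eq_one_iff.2 hx)
    hw]
  abel

def innerSlice (x : E) (r : ℝ) (w : E) : Set ℝ := {a | a • normalize x + w ∈ innerRegion x r}

def parallelLeaf (x : E) (r : ℝ) (w : E) : Set E :=
  (fun a : ℝ => a • normalize x + w) '' innerSlice x r w

theorem mem_parallelLeaf (hy : y ∈ innerRegion x r) :
    y ∈ parallelLeaf x r (orthComponent x y) := by
  refine ⟨⟪normalize x, y⟫, ?_, inner_smul_add_orthComponent x y⟩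
  rwa [innerSlice, mem_ofPred_eq, inner_smul_add_orthComponent]

theorem parallelLeaf_subset : parallelLeaf x r w ⊆ innerRegion x r := by
  rintro _ ⟨a, ha, rfl⟩
  exact ha

theorem orthComponent_eq_of_mem_parallelLeaf (hx : x ≠ 0) (hw : ⟪normalize x, w⟫ = 0)
    (hp : p ∈ parallelLeaf x r w) : orthComponent x p = w := by
  obtain ⟨a, -, rfl⟩ := hp
  exact orthComponent_smul_add hx hw a

theorem innerSlice_zero (hx : x ≠ 0) (hr0 : 0 < r) (hrπ : r ≤ π) :
    innerSlice x r 0 = Iic (‖x‖ * exp (-r)) := by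
  have he := norm_normalize_eq_one_iff.2 hx
  ext a
  simp only [innerSlice, innerRegion, add_zero, mem_ofPred_eq, mem_Iic]
  rcases lt_trichotomy a 0 with ha | rfl | ha
  · refine iff_of_true (Or.inl ?_) (ha.le.trans (by positivity))
    rwa [angle_smul_right_of_neg _ _ ha, angle_neg_right, angle_normalize_right, angle_self hx,
      sub_zero]
  · rw [zero_smul, norm_zero, zero_mul]
    exact iff_of_true (Or.inr (norm_nonneg x)) (by positivity)
  · rw [angle_smul_right_of_pos _ _ ha, angle_normalize_right, angle_self hx, norm_smul, he,
      mul_one, norm_of_nonneg ha.le, zero_pow two_ne_zero, sub_zero, sqrt_sq hr0.le, exp_neg,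
      ← div_eq_mul_inv, le_div_iff₀ (exp_pos r)]
    exact or_iff_right (not_le.2 hr0)

theorem angle_smul_normalize_add (hx : x ≠ 0) (hw : ⟪normalize x, w⟫ = 0) (hw0 : w ≠ 0)
    (a : ℝ) : angle x (a • normalize x + w) = π / 2 - arctan (a / ‖w‖) := by
  rw [← angle_normalize_left, angle_smul_add_of_inner_eq_zero
    (norm_normalize_eq_one_iff.2 hx) hw hw0]

theorem isLowerSet_innerSlice (hx : x ≠ 0) (hr0 : 0 < r) (hrπ : r ≤ π)
    (hH : AntitoneOn (fun t => √(r ^ 2 - t ^ 2) - log (sin t)) (Ioo 0 r))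
    (hw : ⟪normalize x, w⟫ = 0) : IsLowerSet (innerSlice x r w) := by
  rcases eq_or_ne w 0 with rfl | hw0
  · rw [innerSlice_zero hx hr0 hrπ]
    exact isLowerSet_Iic _
  have he := norm_normalize_eq_one_iff.2 hx
  have hv : 0 < ‖w‖ := norm_pos_iff.2 hw0
  set θ : ℝ → ℝ := fun a => angle x (a • normalize x + w) with hθ
  have hθ_pos (a : ℝ) : 0 < θ a := by
    simp only [hθ, angle_smul_normalize_add hx hw hw0]
    linarith [arctan_lt_pi_div_two (a / ‖w‖)]
  -- `‖p‖ sin θ = ‖w‖` on the line turns the condition of `innerRegion` into one on `θ` alone.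
  have hnorm_exp (a : ℝ) : ‖a • normalize x + w‖ * exp √(r ^ 2 - θ a ^ 2) =
      ‖w‖ * exp (√(r ^ 2 - θ a ^ 2) - log (sin (θ a))) := by
    have hsin : ‖a • normalize x + w‖ * sin (θ a) = ‖w‖ := by
      simpa only [hθ, angle_normalize_left] using
        norm_mul_sin_angle_smul_add_of_inner_eq_zero he hw hw0 a
    have hsin_pos : 0 < sin (θ a) :=
      pos_of_mul_pos_right (hsin ▸ hv) (norm_nonneg _)
    rw [exp_sub, exp_log hsin_pos, ← hsin]
    field_simp
  intro a b hba ha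
  have hθ_anti : θ a ≤ θ b := by
    simp only [hθ, angle_smul_normalize_add hx hw hw0]
    gcongr
  rcases le_or_gt r (θ b) with hb | hb
  · exact Or.inl hb
  have ha' := ha.resolve_left (not_le.2 (hθ_anti.trans_lt hb))
  refine Or.inr (calc
    _ = ‖w‖ * exp (√(r ^ 2 - θ b ^ 2) - log (sin (θ b))) := hnorm_exp b
    _ ≤ ‖w‖ * exp (√(r ^ 2 - θ a ^ 2) - log (sin (θ a))) :=
      mul_le_mul_of_nonneg_left
        (exp_le_exp.2 (hH ⟨hθ_pos a, hθ_anti.trans_lt hb⟩ ⟨hθ_pos b, hb⟩ hθ_anti)) hv.le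
    _ = _ := (hnorm_exp a).symm
    _ ≤ ‖x‖ := ha')

theorem bddAbove_innerSlice (hx : x ≠ 0) (hr0 : 0 < r) (hrπ : r < π)
    (hw : ⟪normalize x, w⟫ = 0) : BddAbove (innerSlice x r w) := by
  rcases eq_or_ne w 0 with rfl | hw0
  · rw [innerSlice_zero hx hr0 hrπ.le]
    exact bddAbove_Iic
  have he := norm_normalize_eq_one_iff.2 hx
  have hv : 0 < ‖w‖ := norm_pos_iff.2 hw0
  refine ⟨max (‖w‖ * tan (π / 2 - r)) ‖x‖, fun a ha => ?_⟩
  rcases ha with hθ | hnorm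
  · refine le_max_of_le_left ?_
    rw [angle_smul_normalize_add hx hw hw0] at hθ
    rw [← div_le_iff₀' hv]
    by_contra! h
    have := arctan_strictMono h
    rw [arctan_tan (by linarith) (by linarith)] at this
    linarith
  · refine le_max_of_le_right (le_trans ?_ hnorm)
    calc a = ⟪normalize x, a • normalize x + w⟫ := (inner_smul_add_of_inner_eq_zero he hw a).symm
      _ ≤ ‖a • normalize x + w‖ := by simpa [he] using real_inner_le_norm (normalize x) _
      _ ≤ _ := le_mul_of_one_le_right (norm_nonneg _) (one_le_exp (sqrt_nonneg _))

theorem isHalfLine_parallelLeaf (hx : x ≠ 0) (hr0 : 0 < r) (hrπ : r < π)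
    (hH : AntitoneOn (fun t => √(r ^ 2 - t ^ 2) - log (sin t)) (Ioo 0 r))
    (hy : y ∈ innerRegion x r) : IsHalfLine (parallelLeaf x r (orthComponent x y)) := by
  have hw := inner_normalize_orthComponent hx y
  obtain ⟨a, ha, -⟩ := mem_parallelLeaf hy
  exact (isLowerSet_innerSlice hx hr0 hrπ.le hH hw).isHalfLine_image ⟨a, ha⟩
    (bddAbove_innerSlice hx hr0 hrπ hw) ((normalize_eq_zero_iff x).not.2 hx) _

theorem closeToConvex_kBall_of_antitoneOn (hx : x ≠ 0) (hr0 : 0 < r) (hrπ : r < π)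
    (hH : AntitoneOn (fun t => √(r ^ 2 - t ^ 2) - log (sin t)) (Ioo 0 r)) :
    CloseToConvex (kBall x r) := by
  classical
  let L : E → Set E := fun y => if y ∈ outerRegion x r then radialLeaf x r (normalize y)
    else parallelLeaf x r (orthComponent x y)
  have hL_outer {y : E} (hy : y ∈ outerRegion x r) : L y = radialLeaf x r (normalize y) :=
    if_pos hy
  have hL_inner {y : E} (hy : y ∈ innerRegion x r) :
      L y = parallelLeaf x r (orthComponent x y) :=
    if_neg ((disjoint_outerRegion_innerRegion hx).notMem_of_mem_right hy)
  refine closeToConvex_of_leaves L ?_ ?_ ?_ ?_ <;> rw [compl_kBall hx hr0.le] <;>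
    rintro y (hy | hy)
  · rw [hL_outer hy]
    exact mem_radialLeaf hy
  · rw [hL_inner hy]
    exact mem_parallelLeaf hy
  · rw [hL_outer hy]
    exact (radialLeaf_subset hx hy).trans subset_union_left
  · rw [hL_inner hy]
    exact parallelLeaf_subset.trans subset_union_right
  · rw [hL_outer hy]
    exact isHalfLine_radialLeaf
      ((normalize_eq_zero_iff y).not.2 (ne_zero_of_mem_outerRegion hx hy))
  · rw [hL_inner hy]
    exact isHalfLine_parallelLeaf hx hr0 hrπ hH hy
  · intro p hp
    rw [hL_outer hy] at hp ⊢
    rw [hL_outer (radialLeaf_subset hx hy hp), normalize_eq_of_mem_radialLeaf hx hp,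
      normalize_normalize]
  · intro p hp
    rw [hL_inner hy] at hp ⊢
    rw [hL_inner (parallelLeaf_subset hp),
      orthComponent_eq_of_mem_parallelLeaf hx (inner_normalize_orthComponent hx y) hp]

end PuncturedSpace

theorem kBall_closeToConvex_of_puncturedSpace_general {n : ℕ}
    (lam : ℝ) (hlam : lam ∈ Set.Ioo 2 Real.pi)
    (hlam0 : Real.cos (Real.sqrt (lam ^ 2 - 1))
      + Real.sqrt (lam ^ 2 - 1) * Real.sin (Real.sqrt (lam ^ 2 - 1)) = 0)
    (x : EuclideanSpace ℝ (Fin n)) (hx : x ≠ 0)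
    (r : ℝ) (hr0 : 0 < r) (hr : r ≤ lam) :
    CloseToConvex (kBall x r) := by
  have hrπ : r < π := hr.trans_lt hlam.2
  have hcos : ∀ t ∈ Ioo 0 r, 0 ≤ t + r * cos t := fun t ht =>
    add_mul_cos_nonneg_of_le_lam hlam hlam0 hr ht
  exact closeToConvex_kBall_of_antitoneOn hx hr0 hrπ (antitoneOn_sqrt_sub_log_sin hrπ.le hcos)

/-- Klén, Corollary 3.5: in the punctured space `G = ℝⁿ \ {0}`, `n ≥ 2`, for `x ∈ G` and
`0 < r ≤ λ`, where `λ ∈ (2,π)` solves `cos √(z²-1) + √(z²-1) sin √(z²-1) = 0`,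
the quasihyperbolic ball `B_k(x,r)` is close-to-convex. -/
theorem kBall_closeToConvex_of_puncturedSpace {n : ℕ} (hn : 2 ≤ n)
    (lam : ℝ) (hlam : lam ∈ Set.Ioo 2 Real.pi)
    (hlam0 : Real.cos (Real.sqrt (lam ^ 2 - 1))
      + Real.sqrt (lam ^ 2 - 1) * Real.sin (Real.sqrt (lam ^ 2 - 1)) = 0)
    (x : EuclideanSpace ℝ (Fin n)) (hx : x ≠ 0)
    (r : ℝ) (hr0 : 0 < r) (hr : r ≤ lam) :
    CloseToConvex (kBall x r) :=
  kBall_closeToConvex_of_puncturedSpace_general lam hlam hlam0 x hx r hr0 hr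
end

section
/- Let G = ℝ² \ {(−1,0), (1,0)} (equivalently ℂ \ {−1,1}), let x = (0,√3) and let r ∈ (log(1+√3), log(29/10)). Then the j-metric ball B_j(x,r) is not a connected set. -/
/-!
The ball contains `x = (0, √3)` and `-x = (0, -√3)`, since `d(x) = d(-x) = 2` gives
`j_G(x, -x) = log (1 + √3)`. The half-strip `S = {|a| < 2, b < -3/5}` contains `-x` but not `x`.
On the boundary of `S` one checks `|x - y| ≥ 19/10 · min (d(x), d(y))`, i.e.
`j_G(x, y) ≥ log (29/10)`, so the ball misses `∂S` and the two open sets `S` and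
`(closure S)ᶜ` disconnect it.
-/

open Metric

theorem Metric.infDist_pair {E : Type*} [PseudoMetricSpace E] (x a b : E) :
    infDist x {a, b} = min (dist x a) (dist x b) := by
  rw [infDist, Set.insert_eq, infEDist_union, infEDist_singleton, infEDist_singleton,
    edist_dist, edist_dist, ← ENNReal.ofReal_min, ENNReal.toReal_ofReal (by positivity)]

theorem Set.Finite.frontier_compl {E : Type*} [NormedAddCommGroup E] [NormedSpace ℝ E]
    [Nontrivial E] {s : Set E} (hs : s.Finite) : frontier sᶜ = s := by
  rw [_root_.frontier_compl, hs.isClosed.frontier_eq,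
    interior_eq_empty_iff_dense_compl.2 (hs.countable.dense_compl ℝ), Set.sdiff_empty]

theorem jDist_self {E : Type*} [NormedAddCommGroup E] (G : Set E) (x : E) : jDist G x x = 0 := by
  simp [jDist]

theorem jDist_lt_iff {E : Type*} [NormedAddCommGroup E] {G : Set E} {x y : E} {r : ℝ}
    (h : 0 < min (infDist x (frontier G)) (infDist y (frontier G))) :
    jDist G x y < r ↔
      dist x y < (Real.exp r - 1) * min (infDist x (frontier G)) (infDist y (frontier G)) := by
  rw [jDist, Real.log_lt_iff_lt_exp (by positivity), ← lt_sub_iff_add_lt', div_lt_iff₀ h]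

/-- `|x - y| ≥ 19/10 · m` for `x = (0, h)`, `y = (±a, b)` on the boundary of the half-strip and
`m ≤ min (d(x), d(y))`. -/
theorem halfStrip_boundary_sq_le {a b h m : ℝ} (hh : 17/10 ≤ h) (ha₀ : 0 ≤ a) (ha : a ≤ 2)
    (hb : b ≤ -(3/5)) (hbd : 2 ≤ a ∨ -(3/5) ≤ b) (hm₀ : 0 ≤ m) (hm₂ : m ≤ 2)
    (hm : m ^ 2 ≤ (a - 1) ^ 2 + b ^ 2) :
    (19/10 * m) ^ 2 ≤ a ^ 2 + (h - b) ^ 2 := by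
  have hhb : (23/10) ^ 2 ≤ (h - b) ^ 2 := by nlinarith
  rcases hbd with ha' | hb'
  · obtain rfl : a = 2 := le_antisymm ha ha'
    rcases le_total b (-(8/5)) with hb' | hb' <;> nlinarith
  · obtain rfl : b = -(3/5) := le_antisymm hb hb'
    nlinarith

local notation "ℝ²" => EuclideanSpace ℝ (Fin 2)
local notation "punctures" => ({-EuclideanSpace.single 0 1, EuclideanSpace.single 0 1} : Set ℝ²)
local notation "x₀" => (√3 • EuclideanSpace.single 1 1 : ℝ²)

theorem EuclideanSpace.dist_eq_fin_two (y z : ℝ²) :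
    dist y z = √((y 0 - z 0) ^ 2 + (y 1 - z 1) ^ 2) := by
  simp [EuclideanSpace.dist_eq, Fin.sum_univ_two, Real.dist_eq, sq_abs]

theorem infDist_punctures (y : ℝ²) : infDist y punctures = √((|y 0| - 1) ^ 2 + y 1 ^ 2) := by
  rw [infDist_pair, EuclideanSpace.dist_eq_fin_two, EuclideanSpace.dist_eq_fin_two]
  simp only [PiLp.neg_apply, PiLp.single_apply, Fin.isValue, if_true,
    Fin.one_eq_zero_iff, OfNat.ofNat_ne_one, if_false]
  rcases le_total 0 (y 0) with hy | hy
  · rw [abs_of_nonneg hy, min_eq_right (Real.sqrt_le_sqrt (by nlinarith))]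
    ring_nf
  · rw [abs_of_nonpos hy, min_eq_left (Real.sqrt_le_sqrt (by nlinarith))]
    ring_nf

theorem infDist_smul_single_one_punctures (h : ℝ) :
    infDist (h • EuclideanSpace.single 1 1 : ℝ²) punctures = √(1 + h ^ 2) := by
  simp [infDist_punctures]

theorem smul_single_one_notMem_punctures (t : ℝ) :
    (t • EuclideanSpace.single 1 1 : ℝ²) ∉ punctures := by
  rw [(Set.toFinite _).isClosed.notMem_iff_infDist_pos (by simp),
    infDist_smul_single_one_punctures]
  positivity

theorem jDist_punctures_compl_smul_single_one (s t : ℝ) :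
    jDist punctures ᶜ (s • EuclideanSpace.single 1 1) (t • EuclideanSpace.single 1 1) =
      Real.log (1 + |s - t| / min √(1 + s ^ 2) √(1 + t ^ 2)) := by
  rw [jDist, (Set.toFinite _).frontier_compl, infDist_smul_single_one_punctures,
    infDist_smul_single_one_punctures, EuclideanSpace.dist_eq_fin_two]
  simp [Real.sqrt_sq_eq_abs]

theorem jDist_punctures_compl_sqrt_three_neg :
    jDist punctures ᶜ x₀ ((-√3) • EuclideanSpace.single 1 1) = Real.log (1 + √3) := by
  rw [jDist_punctures_compl_smul_single_one, sub_neg_eq_add, neg_sq, Real.sq_sqrt zero_le_three,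
    min_self, show (1 + 3 : ℝ) = 2 ^ 2 by norm_num, Real.sqrt_sq zero_le_two,
    abs_of_pos (by positivity)]
  ring_nf

def halfStrip : Set ℝ² := {y | |y 0| < 2 ∧ y 1 < -(3/5)}

def halfStripExterior : Set ℝ² := {y | 2 < |y 0|} ∪ {y | -(3/5) < y 1}

theorem isOpen_halfStrip : IsOpen halfStrip := by
  refine .and (isOpen_lt ?_ ?_) (isOpen_lt ?_ ?_) <;> fun_prop

theorem isOpen_halfStripExterior : IsOpen halfStripExterior := by
  refine .union (isOpen_lt ?_ ?_) (isOpen_lt ?_ ?_) <;> fun_prop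

theorem disjoint_halfStrip_halfStripExterior : Disjoint halfStrip halfStripExterior := by
  rw [Set.disjoint_left]
  rintro y ⟨ha, hb⟩ (ha' | hb')
  exacts [lt_asymm ha ha', lt_asymm hb hb']

theorem mem_halfStrip_union_exterior_of_jDist_lt {y : ℝ²} (hy : y ∉ punctures)
    (hj : jDist punctures ᶜ x₀ y < Real.log (29/10)) :
    y ∈ halfStrip ∪ halfStripExterior := by
  by_contra hy_out
  simp only [halfStrip, halfStripExterior, Set.mem_union, Set.mem_ofPred_eq, not_or, not_and_or,
    not_lt] at hy_out
  obtain ⟨hbd, ha, hb⟩ := hy_out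
  have hfr : frontier punctures ᶜ = punctures := (Set.toFinite _).frontier_compl
  have hx : infDist x₀ (frontier punctures ᶜ) = 2 := by
    rw [hfr, infDist_smul_single_one_punctures]
    norm_num
  have hy_pos : 0 < infDist y (frontier punctures ᶜ) := by
    rwa [hfr, ← (Set.toFinite _).isClosed.notMem_iff_infDist_pos (by simp)]
  set m := min (infDist x₀ (frontier punctures ᶜ)) (infDist y (frontier punctures ᶜ))
  have hm₀ : 0 < m := lt_min (by rw [hx]; norm_num) hy_pos
  rw [jDist_lt_iff hm₀, Real.exp_log (by norm_num)] at hj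
  have hmy : m ^ 2 ≤ (|y 0| - 1) ^ 2 + y 1 ^ 2 := by
    rw [← Real.le_sqrt' hm₀, ← infDist_punctures, ← hfr]
    exact min_le_right _ _
  have hsq := halfStrip_boundary_sq_le (h := √3) (Real.le_sqrt_of_sq_le (by norm_num))
    (abs_nonneg _) ha hb hbd hm₀.le (hx ▸ min_le_left _ _) hmy
  have hdist : 19/10 * m ≤ dist x₀ y := by
    rw [EuclideanSpace.dist_eq_fin_two]
    apply Real.le_sqrt_of_sq_le
    simpa [sq_abs] using hsq
  linarith

/-- Klén, Remark 2.5 (1): in `G = ℝ² \ {(-1,0), (1,0)}` with `x = (0,√3)` and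
`r ∈ (log (1+√3), log (29/10))`, the `j`-metric ball `B_j(x,r)` is not connected. -/
theorem jBall_not_connected_twice_punctured_plane
    (e₀ e₁ x : EuclideanSpace ℝ (Fin 2)) (G : Set (EuclideanSpace ℝ (Fin 2)))
    (he₀ : e₀ = EuclideanSpace.single 0 1) (he₁ : e₁ = EuclideanSpace.single 1 1)
    (hG : G = ({-e₀, e₀} : Set (EuclideanSpace ℝ (Fin 2)))ᶜ)
    (hx : x = Real.sqrt 3 • e₁)
    (r : ℝ) (hr : r ∈ Set.Ioo (Real.log (1 + Real.sqrt 3)) (Real.log (29 / 10))) :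
    ¬ IsConnected (jBall G x r) := by
  subst he₀ he₁ hG hx
  obtain ⟨hr₁, hr₂⟩ := hr
  have hr₀ : 0 < r := (Real.log_pos (lt_add_of_pos_right 1 (by positivity))).trans hr₁
  have hx_mem : x₀ ∈ jBall punctures ᶜ x₀ r :=
    ⟨smul_single_one_notMem_punctures _, (jDist_self punctures ᶜ x₀).symm ▸ hr₀⟩
  have hnegx_mem : (-√3) • EuclideanSpace.single 1 1 ∈ jBall punctures ᶜ x₀ r :=
    ⟨smul_single_one_notMem_punctures _, jDist_punctures_compl_sqrt_three_neg ▸ hr₁⟩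
  have hs : 3/5 < √3 := Real.lt_sqrt_of_sq_lt (by norm_num)
  intro hconn
  obtain ⟨z, -, hzS, hzE⟩ := hconn.isPreconnected halfStrip halfStripExterior isOpen_halfStrip
    isOpen_halfStripExterior (fun y hy => mem_halfStrip_union_exterior_of_jDist_lt hy.1
      (hy.2.trans hr₂)) ⟨_, hnegx_mem, by simpa [halfStrip] using hs⟩
      ⟨_, hx_mem, Or.inr (by simpa using by linarith)⟩
  exact Set.disjoint_left.1 disjoint_halfStrip_halfStripExterior hzS hzE
end
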